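/- Let $(X, \mu)$ be a finite measure space with $\mu(X) > 0$, $\chi : X \to \mathbb{R}$ an integrable function, and $u : X \to \mathbb{R}$ a measurable function satisfying $0 < m \leq u \leq c_0 m$ $\mu$-a.e. for some constants $m > 0$ and $c_0 \geq 1$. Then $$\frac{\int_X \chi u^2\, d\mu}{\int_X u^2\, d\mu} \;\geq\; \frac{1}{c_0^2\, \mu(X)} \left( \int_X \chi_+\, d\mu \; - \; c_0^4 \int_X \chi_-\, d\mu \right),$$ where $\chi_+ = \max(\chi, 0)$ and $\chi_- = \max(-\chi, 0)$. -/

import Mathlib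

/-!
Write `w = u²`, so that `m² ≤ w ≤ c₀² m²` a.e., and split `χ = χ₊ - χ₋`. Then
`m² ∫ χ₊ ≤ ∫ χ₊ w`, `∫ χ₋ w ≤ c₀² m² ∫ χ₋` and `m² μ(X) ≤ ∫ w ≤ c₀² m² μ(X)`. Dividing by `∫ w`
costs one factor `c₀²` on each part: `∫ χ₊ w / ∫ w ≥ c₀⁻² ∫ χ₊ / μ(X)` and
`∫ χ₋ w / ∫ w ≤ c₀² ∫ χ₋ / μ(X)`, which is the claimed bound.
-/

open MeasureTheory

section WeightedAverage

variable {X : Type*} [MeasurableSpace X] {μ : Measure X} {f w : X → ℝ} {a b : ℝ}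

lemma ae_norm_le_of_ae_mem_Icc (ha : 0 ≤ a) (hw : ∀ᵐ x ∂μ, w x ∈ Set.Icc a b) :
    ∀ᵐ x ∂μ, ‖w x‖ ≤ b := by
  filter_upwards [hw] with x hx
  rw [Real.norm_of_nonneg (ha.trans hx.1)]
  exact hx.2

lemma mul_integral_le_integral_mul (hf : Integrable f μ) (hf0 : 0 ≤ᵐ[μ] f)
    (hfw : Integrable (fun x => f x * w x) μ) (hw : ∀ᵐ x ∂μ, a ≤ w x) :
    a * ∫ x, f x ∂μ ≤ ∫ x, f x * w x ∂μ := by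
  rw [← integral_const_mul]
  refine integral_mono_ae (hf.const_mul a) hfw ?_
  filter_upwards [hf0, hw] with x hfx hwx
  simpa only [mul_comm a] using mul_le_mul_of_nonneg_left hwx hfx

lemma integral_mul_le_mul_integral (hf : Integrable f μ) (hf0 : 0 ≤ᵐ[μ] f)
    (hfw : Integrable (fun x => f x * w x) μ) (hw : ∀ᵐ x ∂μ, w x ≤ b) :
    ∫ x, f x * w x ∂μ ≤ b * ∫ x, f x ∂μ := by
  rw [← integral_const_mul]
  refine integral_mono_ae hfw (hf.const_mul b) ?_
  filter_upwards [hf0, hw] with x hfx hwx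
  simpa only [mul_comm b] using mul_le_mul_of_nonneg_left hwx hfx

variable [IsFiniteMeasure μ]

lemma integral_mem_Icc_of_ae_mem_Icc (hw_meas : AEStronglyMeasurable w μ) (ha : 0 ≤ a)
    (hw : ∀ᵐ x ∂μ, w x ∈ Set.Icc a b) :
    ∫ x, w x ∂μ ∈ Set.Icc (a * μ.real Set.univ) (b * μ.real Set.univ) := by
  have hw_int : Integrable w μ :=
    (integrable_const b).mono' hw_meas (ae_norm_le_of_ae_mem_Icc ha hw)
  constructor
  · simpa only [integral_const, smul_eq_mul, mul_comm] using
      integral_mono_ae (integrable_const a) hw_int (hw.mono fun x hx => hx.1)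
  · simpa only [integral_const, smul_eq_mul, mul_comm] using
      integral_mono_ae hw_int (integrable_const b) (hw.mono fun x hx => hx.2)

lemma div_mul_integral_div_le_integral_mul_div_integral (hμ : μ Set.univ ≠ 0)
    (hf : Integrable f μ) (hf0 : 0 ≤ᵐ[μ] f) (hw_meas : AEStronglyMeasurable w μ) (ha : 0 < a)
    (hw : ∀ᵐ x ∂μ, w x ∈ Set.Icc a b) :
    a / b * (∫ x, f x ∂μ) / μ.real Set.univ ≤ (∫ x, f x * w x ∂μ) / ∫ x, w x ∂μ := by
  have hV : 0 < μ.real Set.univ := ENNReal.toReal_pos hμ (measure_ne_top μ _)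
  obtain ⟨hB_ge, hB_le⟩ := integral_mem_Icc_of_ae_mem_Icc hw_meas ha.le hw
  have hB : 0 < ∫ x, w x ∂μ := lt_of_lt_of_le (by positivity) hB_ge
  have hb : 0 < b := pos_of_mul_pos_left (hB.trans_le hB_le) hV.le
  have hfw_int := hf.mul_bdd hw_meas (ae_norm_le_of_ae_mem_Icc ha.le hw)
  have haP : 0 ≤ a * ∫ x, f x ∂μ := mul_nonneg ha.le (integral_nonneg_of_ae hf0)
  calc a / b * (∫ x, f x ∂μ) / μ.real Set.univ
      = a * (∫ x, f x ∂μ) / (b * μ.real Set.univ) := by field_simp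
    _ ≤ a * (∫ x, f x ∂μ) / ∫ x, w x ∂μ := div_le_div_of_nonneg_left haP hB hB_le
    _ ≤ (∫ x, f x * w x ∂μ) / ∫ x, w x ∂μ :=
        div_le_div_of_nonneg_right
          (mul_integral_le_integral_mul hf hf0 hfw_int (hw.mono fun x hx => hx.1)) hB.le

lemma integral_mul_div_integral_le_div_mul_integral_div (hμ : μ Set.univ ≠ 0)
    (hf : Integrable f μ) (hf0 : 0 ≤ᵐ[μ] f) (hw_meas : AEStronglyMeasurable w μ) (ha : 0 < a)
    (hw : ∀ᵐ x ∂μ, w x ∈ Set.Icc a b) :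
    (∫ x, f x * w x ∂μ) / ∫ x, w x ∂μ ≤ b / a * (∫ x, f x ∂μ) / μ.real Set.univ := by
  have hV : 0 < μ.real Set.univ := ENNReal.toReal_pos hμ (measure_ne_top μ _)
  obtain ⟨hB_ge, hB_le⟩ := integral_mem_Icc_of_ae_mem_Icc hw_meas ha.le hw
  have hB : 0 < ∫ x, w x ∂μ := lt_of_lt_of_le (by positivity) hB_ge
  have hb : 0 < b := pos_of_mul_pos_left (hB.trans_le hB_le) hV.le
  have hfw_int := hf.mul_bdd hw_meas (ae_norm_le_of_ae_mem_Icc ha.le hw)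
  have hbN : 0 ≤ b * ∫ x, f x ∂μ := mul_nonneg hb.le (integral_nonneg_of_ae hf0)
  calc (∫ x, f x * w x ∂μ) / ∫ x, w x ∂μ
      ≤ b * (∫ x, f x ∂μ) / ∫ x, w x ∂μ :=
        div_le_div_of_nonneg_right
          (integral_mul_le_mul_integral hf hf0 hfw_int (hw.mono fun x hx => hx.2)) hB.le
    _ ≤ b * (∫ x, f x ∂μ) / (a * μ.real Set.univ) :=
        div_le_div_of_nonneg_left hbN (by positivity) hB_ge
    _ = b / a * (∫ x, f x ∂μ) / μ.real Set.univ := by field_simp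

lemma div_mul_integral_posPart_sub_le_integral_mul_div_integral {χ : X → ℝ}
    (hμ : μ Set.univ ≠ 0) (hχ : Integrable χ μ) (hw_meas : AEStronglyMeasurable w μ)
    (ha : 0 < a) (hw : ∀ᵐ x ∂μ, w x ∈ Set.Icc a b) :
    a / b * (∫ x, max (χ x) 0 ∂μ) / μ.real Set.univ
        - b / a * (∫ x, max (-χ x) 0 ∂μ) / μ.real Set.univ
      ≤ (∫ x, χ x * w x ∂μ) / ∫ x, w x ∂μ := by
  have hw_bdd := ae_norm_le_of_ae_mem_Icc ha.le hw
  have hχ_neg : Integrable (fun x => max (-χ x) 0) μ := hχ.neg.pos_part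
  have hsplit : ∫ x, χ x * w x ∂μ
      = (∫ x, max (χ x) 0 * w x ∂μ) - ∫ x, max (-χ x) 0 * w x ∂μ := by
    rw [← integral_sub (hχ.pos_part.mul_bdd hw_meas hw_bdd) (hχ_neg.mul_bdd hw_meas hw_bdd)]
    simp only [← sub_mul, max_zero_sub_max_neg_zero_eq_self]
  rw [hsplit, sub_div]
  have hpos := div_mul_integral_div_le_integral_mul_div_integral hμ hχ.pos_part
    (ae_of_all _ fun x => le_max_right (χ x) 0) hw_meas ha hw
  have hneg := integral_mul_div_integral_le_div_mul_integral_div hμ hχ_neg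
    (ae_of_all _ fun x => le_max_right (-χ x) 0) hw_meas ha hw
  linarith

end WeightedAverage

/-- Rayleigh-quotient lower bound (Lemma 4.1): if `0 < m ≤ u ≤ c₀ m` a.e., then
`(∫ χ u²)/(∫ u²) ≥ (c₀² μ(X))⁻¹ (∫ χ₊ - c₀⁴ ∫ χ₋)`. -/
theorem stmt_2 {X : Type*} [MeasurableSpace X] (μ : Measure X) [IsFiniteMeasure μ]
    (hpos : 0 < μ Set.univ) (χ u : X → ℝ) (hχ : Integrable χ μ) (hu_meas : Measurable u)
    (m c₀ : ℝ) (hm : 0 < m) (hc₀ : 1 ≤ c₀)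
    (hu : ∀ᵐ x ∂μ, m ≤ u x ∧ u x ≤ c₀ * m) :
    (∫ x, χ x * (u x) ^ 2 ∂μ) / (∫ x, (u x) ^ 2 ∂μ) ≥
      (1 / (c₀ ^ 2 * (μ Set.univ).toReal)) *
        ((∫ x, max (χ x) 0 ∂μ) - c₀ ^ 4 * ∫ x, max (-(χ x)) 0 ∂μ) := by
  have hu_sq : ∀ᵐ x ∂μ, u x ^ 2 ∈ Set.Icc (m ^ 2) ((c₀ * m) ^ 2) := by
    filter_upwards [hu] with x ⟨hmu, huc⟩
    exact ⟨pow_le_pow_left₀ hm.le hmu 2, pow_le_pow_left₀ (hm.le.trans hmu) huc 2⟩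
  have key := div_mul_integral_posPart_sub_le_integral_mul_div_integral hpos.ne'
    hχ (hu_meas.pow_const 2).aestronglyMeasurable (by positivity) hu_sq
  have hc₀m : c₀ * m ≠ 0 := by positivity
  convert key using 1
  rw [← measureReal_def]
  field_simp
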